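/- Let σ : V × V → V satisfy σ(x,y) ∈ N[x] for all x,y ∈ V, and let T ∈ ℕ be such that σ guarantees capture within T rounds in the turn-based game: for all x₀,y₀ ∈ V and every sequence (y_t)_{t≥0} with y_{t+1} ∈ N[y_t] for all t, the sequence defined by x_{t+1} = σ(x_t, y_t) satisfies x_{t+1} = y_t for some t < T. Let π_C^# be the memoryless randomized cop strategy in the concurrent game defined by: from position (x,y), sample a vertex v uniformly at random from N[y] and move the cop to σ(x,v). Then for every robber strategy π_R and every initial position (x,y) ∈ V², the set of infinite play histories in which the robber is never captured has probability zero under the play measure induced by π_C^#, π_R, and (x,y); i.e., π_C^# captures the robber with probability one. -/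

import Mathlib

open Finset Filter

noncomputable section

variable {V : Type*} [Fintype V] [DecidableEq V]

/-- The closed neighborhood `N[u]` of a vertex `u`: `u` together with its neighbors. -/
def nbhd (G : SimpleGraph V) [DecidableRel G.Adj] (u : V) : Finset V :=
  insert u (G.neighborFinset u)

lemma nbhd_nonempty (G : SimpleGraph V) [DecidableRel G.Adj] (u : V) :
    (nbhd G u).Nonempty :=
  ⟨u, Finset.mem_insert_self u _⟩

/-! ### The single-cop concurrent game, with the expected-capture-time payoff -/

/-- A randomized strategy in the single-cop concurrent game: to each finite history of
positions (cop location, robber location) it assigns a distribution over next moves. -/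
abbrev Strat (V : Type*) := List (V × V) → PMF V

/-- A strategy is memoryless if the distribution it assigns depends only on the
current (most recent) position. -/
def Memoryless (π : Strat V) : Prop :=
  ∀ h₁ h₂ : List (V × V), h₁.getLast? = h₂.getLast? → π h₁ = π h₂

/-- The single-cop CCCR transition function: simultaneous moves within closed
neighborhoods (illegal moves ignored), capture positions are absorbing, and a swap of
adjacent vertices is an \"en passant\" capture. -/
def step1 (G : SimpleGraph V) [DecidableRel G.Adj] (p : V × V) (u w : V) : V × V :=
  if p.1 = p.2 then p
  else
    let u' := if u ∈ nbhd G p.1 then u else p.1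
    let w' := if w ∈ nbhd G p.2 then w else p.2
    if u' = p.2 ∧ w' = p.1 then (u', u') else (u', w')

/-- The distribution over histories of the first `t+1` positions, induced by the
strategies `πC, πR` and the initial position `init`. -/
def play1 (G : SimpleGraph V) [DecidableRel G.Adj]
    (πC πR : Strat V) (init : V × V) : ℕ → PMF (List (V × V))
  | 0 => PMF.pure [init]
  | (t+1) => (play1 G πC πR init t).bind fun h =>
      (πC h).bind fun u => (πR h).bind fun w =>
        PMF.pure (h ++ [step1 G (h.getLast?.getD init) u w])

/-- The probability that cop and robber occupy different vertices at time `t`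
(capture is absorbing, so this is the probability that the robber is still free). -/
def freeProb1 (G : SimpleGraph V) [DecidableRel G.Adj]
    (πC πR : Strat V) (init : V × V) (t : ℕ) : ENNReal :=
  (play1 G πC πR init t).toOuterMeasure
    {h | (h.getLast?.getD init).1 ≠ (h.getLast?.getD init).2}

/-- The payoff: the expected number of rounds `t ≥ 0` at which cop and robber occupy
different vertices, i.e. the expected capture time. -/
def payoff (G : SimpleGraph V) [DecidableRel G.Adj]
    (πC πR : Strat V) (init : V × V) : ENNReal :=
  ∑' t : ℕ, freeProb1 G πC πR init t

/-- The (upper) value of the game started at `init`; the cop minimizes and the robber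
maximizes the expected capture time. -/
def gameValue (G : SimpleGraph V) [DecidableRel G.Adj] (init : V × V) : ENNReal :=
  ⨅ πC : Strat V, ⨆ πR : Strat V, payoff G πC πR init

/-- The cop trajectory generated in the turn-based game by the positional cop strategy
`σ` from initial cop position `x₀`, against robber trajectory `ys`:
`x_{t+1} = σ (x_t, y_t)`. -/
def copSeq (σ : V × V → V) (x₀ : V) (ys : ℕ → V) : ℕ → V
  | 0 => x₀
  | (t+1) => σ (copSeq σ x₀ ys t, ys t)

/-- The memoryless randomized cop strategy `π_C^#` for the concurrent game: from
position `(x, y)`, sample a vertex `v` uniformly at random from `N[y]` and move the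
cop to `σ (x, v)`. -/
def piCSharp (G : SimpleGraph V) [DecidableRel G.Adj] [Nonempty V]
    (σ : V × V → V) : Strat V := fun h =>
  match h.getLast? with
  | some p => (PMF.uniformOfFinset (nbhd G p.2) (nbhd_nonempty G p.2)).map fun v => σ (p.1, v)
  | none => PMF.uniformOfFintype V

/-! Let `ε = 1 / |V|`. From a position `(x, y)`, `π_C^#` guesses the robber's actual next
vertex `w'` with probability at least `1 / |N[y]| ≥ ε`, and after a correct guess the cop stands
at `σ (x, w')`, exactly where the turn-based strategy puts it. Inducting on the number of rounds
the turn-based game still needs, whatever the robber does he survives `T` rounds with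
probability at most `1 - ε ^ T`. As `π_C^#` is memoryless, this bound applies afresh to every
block of `T` rounds, so the survival probability decays like `(1 - ε ^ T) ^ k`. -/

open scoped ENNReal

namespace PMF

variable {α β : Type*}

theorem bind_congr_of_mem_support (p : PMF α) {f g : α → PMF β}
    (h : ∀ a ∈ p.support, f a = g a) : p.bind f = p.bind g := by
  ext b
  simp only [bind_apply]
  refine tsum_congr fun a => ?_
  by_cases ha : p a = 0
  · simp [ha]
  · rw [h a ((mem_support_iff p a).2 ha)]

theorem tsum_mul_le {p : PMF α} {F : α → ℝ≥0∞} {b : ℝ≥0∞} (h : ∀ a, F a ≤ b) :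
    ∑' a, p a * F a ≤ b :=
  calc ∑' a, p a * F a ≤ ∑' a, p a * b := ENNReal.tsum_le_tsum fun a => by gcongr; exact h a
    _ = b := by rw [ENNReal.tsum_mul_right, p.tsum_coe, one_mul]

theorem tsum_mul_add_le {p : PMF α} {F : α → ℝ≥0∞} {b c : ℝ≥0∞} (h : ∀ a, F a + c ≤ b) :
    ∑' a, p a * F a + c ≤ b :=
  calc ∑' a, p a * F a + c = ∑' a, p a * (F a + c) := by
        simp_rw [mul_add]
        rw [ENNReal.tsum_add, ENNReal.tsum_mul_right, p.tsum_coe, one_mul]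
    _ ≤ b := tsum_mul_le h

theorem tsum_mul_add_mul_le_one (p : PMF α) {F : α → ℝ≥0∞} (hF : ∀ b, F b ≤ 1) {a : α}
    {c : ℝ≥0∞} (ha : F a + c ≤ 1) : ∑' b, p b * F b + p a * c ≤ 1 := by
  classical
  have hpoint : p a * c = ∑' b, p b * if b = a then c else 0 := by
    rw [tsum_eq_single a fun b hb => by simp [hb]]
    simp
  rw [hpoint, ← ENNReal.tsum_add]
  simp_rw [← mul_add]
  refine tsum_mul_le fun b => ?_
  split_ifs with hb
  · exact hb ▸ ha
  · simpa using hF b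

end PMF

section Play

variable (G : SimpleGraph V) [DecidableRel G.Adj]

theorem ne_nil_of_mem_support_play1 {πC πR : Strat V} {init : V × V} {t : ℕ}
    {h : List (V × V)} (hh : h ∈ (play1 G πC πR init t).support) : h ≠ [] := by
  cases t with
  | zero => simp_all [play1]
  | succ t =>
    simp only [play1, PMF.mem_support_bind_iff, PMF.mem_support_pure_iff] at hh
    obtain ⟨_, _, _, _, _, _, rfl⟩ := hh
    simp

theorem play1_congr {πC πC' : Strat V} (hC : ∀ h, h ≠ [] → πC h = πC' h) (πR : Strat V)
    (init : V × V) (t : ℕ) : play1 G πC πR init t = play1 G πC' πR init t := by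
  induction t with
  | zero => rfl
  | succ t ih =>
    simp only [play1, ih]
    refine PMF.bind_congr_of_mem_support _ fun h hh => ?_
    rw [hC h (ne_nil_of_mem_support_play1 G hh)]

theorem play1_succ_eq_bind_map_cons (πC πR : Strat V) (init : V × V) (s : ℕ) :
    play1 G πC πR init (s + 1) = (πC [init]).bind fun u => (πR [init]).bind fun w =>
      (play1 G (fun h => πC (init :: h)) (fun h => πR (init :: h)) (step1 G init u w) s).map
        (List.cons init) := by
  induction s with
  | zero => simp [play1, PMF.pure_map]
  | succ s ih =>
    rw [play1, ih]
    simp only [PMF.bind_bind, PMF.bind_map]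
    refine congrArg _ (funext fun u => congrArg _ (funext fun w => ?_))
    rw [play1, PMF.map_bind]
    refine PMF.bind_congr_of_mem_support _ fun h hh => ?_
    have hne := ne_nil_of_mem_support_play1 G hh
    simp [PMF.map_bind, PMF.pure_map, List.getLast?_cons_of_ne_nil hne,
      List.getLast?_eq_some_getLast hne]

theorem freeProb1_le_one (πC πR : Strat V) (init : V × V) (t : ℕ) :
    freeProb1 G πC πR init t ≤ 1 := by
  rw [freeProb1, PMF.toOuterMeasure_apply]
  exact (ENNReal.tsum_le_tsum fun h => Set.indicator_le_self _ _ h).trans_eq (PMF.tsum_coe _)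

theorem freeProb1_succ (πC πR : Strat V) (init : V × V) (s : ℕ) :
    freeProb1 G πC πR init (s + 1) = ∑' w, πR [init] w * ∑' u, πC [init] u *
      freeProb1 G (fun h => πC (init :: h)) (fun h => πR (init :: h)) (step1 G init u w) s := by
  rw [freeProb1, play1_succ_eq_bind_map_cons, PMF.bind_comm]
  simp only [PMF.toOuterMeasure_bind_apply, PMF.toOuterMeasure_map_apply]
  refine tsum_congr fun w => congrArg _ (tsum_congr fun u => congrArg _ ?_)
  refine PMF.toOuterMeasure_apply_eq_of_inter_support_eq _ (Set.ext fun h => ?_)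
  simp only [Set.mem_inter_iff, Set.mem_preimage, and_congr_left_iff]
  intro hh
  have hne := ne_nil_of_mem_support_play1 G hh
  simp [List.getLast?_cons_of_ne_nil hne, List.getLast?_eq_some_getLast hne]

theorem freeProb1_of_captured {init : V × V} (hinit : init.1 = init.2) (πC πR : Strat V)
    (t : ℕ) : freeProb1 G πC πR init t = 0 := by
  induction t generalizing πC πR with
  | zero => simp [freeProb1, play1, PMF.toOuterMeasure_pure_apply, hinit]
  | succ t ih => simp [freeProb1_succ, step1, hinit, ih]

theorem Memoryless.freeProb1_cons {πC : Strat V} (hπ : Memoryless πC) (p : V × V)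
    (πR : Strat V) (init : V × V) (t : ℕ) :
    freeProb1 G (fun h => πC (p :: h)) πR init t = freeProb1 G πC πR init t := by
  rw [freeProb1, freeProb1,
    play1_congr G (fun h hh => hπ _ _ (List.getLast?_cons_of_ne_nil hh)) πR init t]

theorem Memoryless.freeProb1_add_le {πC : Strat V} (hπ : Memoryless πC) {T : ℕ} {r : ℝ≥0∞}
    (hr : ∀ πR p, freeProb1 G πC πR p T ≤ r) (t : ℕ) (πR : Strat V) (init : V × V) :
    freeProb1 G πC πR init (t + T) ≤ r * freeProb1 G πC πR init t := by
  induction t generalizing πR init with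
  | zero =>
    by_cases hcap : init.1 = init.2
    · exact (freeProb1_of_captured G hcap πC πR _).trans_le zero_le
    · simpa [freeProb1, play1, PMF.toOuterMeasure_pure_apply, hcap] using hr πR init
  | succ t ih =>
    rw [Nat.add_right_comm, freeProb1_succ, freeProb1_succ]
    simp only [hπ.freeProb1_cons G]
    calc _ ≤ ∑' w, πR [init] w * ∑' u, πC [init] u *
          (r * freeProb1 G πC (fun h => πR (init :: h)) (step1 G init u w) t) := by
          gcongr with w u
          exact ih _ _
      _ = _ := by simp only [mul_left_comm _ r, ENNReal.tsum_mul_left]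

theorem Memoryless.freeProb1_mul_le_pow {πC : Strat V} (hπ : Memoryless πC) {T : ℕ}
    {r : ℝ≥0∞} (hr : ∀ πR p, freeProb1 G πC πR p T ≤ r) (πR : Strat V) (init : V × V)
    (k : ℕ) : freeProb1 G πC πR init (k * T) ≤ r ^ k := by
  induction k with
  | zero => simpa using freeProb1_le_one G πC πR init 0
  | succ k ih =>
    calc freeProb1 G πC πR init ((k + 1) * T)
        = freeProb1 G πC πR init (k * T + T) := by rw [Nat.succ_mul]
      _ ≤ r * freeProb1 G πC πR init (k * T) := hπ.freeProb1_add_le G hr _ _ _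
      _ ≤ r * r ^ k := by gcongr
      _ = r ^ (k + 1) := (pow_succ' r k).symm

theorem Memoryless.iInf_freeProb1_eq_zero {πC : Strat V} (hπ : Memoryless πC) {T : ℕ}
    {r : ℝ≥0∞} (hr1 : r < 1) (hr : ∀ πR p, freeProb1 G πC πR p T ≤ r) (πR : Strat V)
    (init : V × V) : ⨅ t, freeProb1 G πC πR init t = 0 :=
  le_antisymm (ge_of_tendsto' (ENNReal.tendsto_pow_atTop_nhds_zero_of_lt_one hr1) fun k =>
    (iInf_le _ (k * T)).trans (hπ.freeProb1_mul_le_pow G hr πR init k)) zero_le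

end Play

section Capture

variable (G : SimpleGraph V) [DecidableRel G.Adj]

/-- The turn-based game seen from the concurrent position `(x, y)`: the robber's walk `ys`
starts with a move from `y`. -/
def CapturesWithin (σ : V × V → V) (x y : V) (s : ℕ) : Prop :=
  ∀ ys : ℕ → V, ys 0 ∈ nbhd G y → (∀ t, ys (t + 1) ∈ nbhd G (ys t)) →
    ∃ t < s, copSeq σ x ys (t + 1) = ys t

theorem not_capturesWithin_zero (σ : V × V → V) (x y : V) : ¬ CapturesWithin G σ x y 0 :=
  fun h => by
    obtain ⟨t, ht, -⟩ := h (fun _ => y) (mem_insert_self _ _) fun _ => mem_insert_self _ _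
    exact Nat.not_lt_zero t ht

theorem CapturesWithin.next {σ : V × V → V} {x y y' : V} {s : ℕ}
    (hs : CapturesWithin G σ x y (s + 1)) (hy' : y' ∈ nbhd G y) (hfree : σ (x, y') ≠ y') :
    CapturesWithin G σ (σ (x, y')) y' s := by
  intro ys hys0 hys
  let zs : ℕ → V := fun | 0 => y' | n + 1 => ys n
  have hshift : ∀ t, copSeq σ x zs (t + 1) = copSeq σ (σ (x, y')) ys t := fun t => by
    induction t with
    | zero => rfl
    | succ t ih => exact congrArg (fun z => σ (z, ys t)) ih
  obtain ⟨t, ht, hcap⟩ := hs zs hy' fun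
    | 0 => hys0
    | n + 1 => hys n
  cases t with
  | zero => exact absurd hcap hfree
  | succ t => exact ⟨t, Nat.lt_of_succ_lt_succ ht, (hshift _).symm.trans hcap⟩

theorem exists_step1_captured_or_eq (p : V × V) (w : V) :
    ∃ w' ∈ nbhd G p.2, ∀ u ∈ nbhd G p.1,
      (step1 G p u w).1 = (step1 G p u w).2 ∨ step1 G p u w = (u, w') := by
  refine ⟨if w ∈ nbhd G p.2 then w else p.2, ?_, fun u hu => ?_⟩
  · split_ifs with hw
    exacts [hw, mem_insert_self _ _]
  · unfold step1
    simp only [if_pos hu]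
    split_ifs <;> simp_all

variable [Nonempty V]

theorem piCSharp_memoryless (σ : V × V → V) : Memoryless (piCSharp G σ) := fun h₁ h₂ e => by
  simp only [piCSharp, e]

theorem inv_card_le_piCSharp_apply (σ : V × V → V) {x y v : V} (hv : v ∈ nbhd G y) :
    (Fintype.card V : ℝ≥0∞)⁻¹ ≤ piCSharp G σ [(x, y)] (σ (x, v)) := by
  change _ ≤ (PMF.uniformOfFinset (nbhd G y) (nbhd_nonempty G y)).map _ _
  rw [PMF.map_apply]
  refine le_trans ?_ (ENNReal.le_tsum v)
  simp only [List.getLast_singleton, if_pos, PMF.uniformOfFinset_apply_of_mem _ hv]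
  gcongr
  exact card_le_univ _

theorem freeProb1_piCSharp_add_inv_card_pow_le_one {σ : V × V → V}
    (hσ : ∀ x y, σ (x, y) ∈ nbhd G x) {s : ℕ} {πR : Strat V} {x y : V}
    (hs : CapturesWithin G σ x y s) :
    freeProb1 G (piCSharp G σ) πR (x, y) s + (Fintype.card V : ℝ≥0∞)⁻¹ ^ s ≤ 1 := by
  induction s generalizing πR x y with
  | zero => exact absurd hs (not_capturesWithin_zero G σ x y)
  | succ s ih =>
    set ε : ℝ≥0∞ := (Fintype.card V : ℝ≥0∞)⁻¹
    have hε : ε ^ s ≤ 1 :=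
      pow_le_one₀ zero_le (ENNReal.inv_le_one.2 (by exact_mod_cast Fintype.card_pos))
    rw [freeProb1_succ]
    simp only [(piCSharp_memoryless G σ).freeProb1_cons G]
    refine PMF.tsum_mul_add_le fun w => ?_
    obtain ⟨w', hw'mem, hstep⟩ := exists_step1_captured_or_eq G (x, y) w
    -- if the cop guesses the robber's move `w'`, the play continues as the turn-based one
    have hguess : freeProb1 G (piCSharp G σ) (fun h => πR ((x, y) :: h))
        (step1 G (x, y) (σ (x, w')) w) s + ε ^ s ≤ 1 := by
      rcases hstep _ (hσ x w') with hcap | hmove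
      · rwa [freeProb1_of_captured G hcap, zero_add]
      · rw [hmove]
        by_cases hc : σ (x, w') = w'
        · rwa [freeProb1_of_captured G hc, zero_add]
        · exact ih (hs.next G hw'mem hc)
    refine le_trans ?_ (PMF.tsum_mul_add_mul_le_one (piCSharp G σ [(x, y)])
      (F := fun u => freeProb1 G _ _ (step1 G (x, y) u w) s)
      (fun _ => freeProb1_le_one G _ _ _ _) hguess)
    rw [pow_succ']
    gcongr
    exact inv_card_le_piCSharp_apply G σ hw'mem

end Capture

theorem piCSharp_captures_almost_surely_general (G : SimpleGraph V) [DecidableRel G.Adj]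
    [Nonempty V] (σ : V × V → V)
    (hσ : ∀ x y : V, σ (x, y) ∈ nbhd G x) (T : ℕ)
    (hT : ∀ (x₀ : V) (ys : ℕ → V), (∀ t, ys (t+1) ∈ nbhd G (ys t)) →
      ∃ t < T, copSeq σ x₀ ys (t+1) = ys t) :
    ∀ (πR : Strat V) (init : V × V),
      (⨅ t : ℕ, freeProb1 G (piCSharp G σ) πR init t) = 0 := by
  have hε : (Fintype.card V : ℝ≥0∞)⁻¹ ^ T ≠ 0 :=
    pow_ne_zero _ (ENNReal.inv_ne_zero.2 (ENNReal.natCast_ne_top _))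
  refine (piCSharp_memoryless G σ).iInf_freeProb1_eq_zero G (T := T)
    (ENNReal.sub_lt_self ENNReal.one_ne_top one_ne_zero hε) fun πR ⟨x, y⟩ => ?_
  exact ENNReal.le_sub_of_add_le_right (by simp)
    (freeProb1_piCSharp_add_inv_card_pow_le_one G hσ fun ys _ hys => hT x ys hys)

/-- if the positional cop strategy `σ` guarantees capture within `T`
rounds in the turn-based game, then the memoryless randomized strategy `π_C^#`
captures the robber with probability one in the concurrent game: the set of infinite
play histories in which the robber is never captured has probability zero. -/
theorem piCSharp_captures_almost_surely (G : SimpleGraph V) [DecidableRel G.Adj]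
    [Nonempty V] (hconn : G.Connected) (σ : V × V → V)
    (hσ : ∀ x y : V, σ (x, y) ∈ nbhd G x) (T : ℕ)
    (hT : ∀ (x₀ : V) (ys : ℕ → V), (∀ t, ys (t+1) ∈ nbhd G (ys t)) →
      ∃ t < T, copSeq σ x₀ ys (t+1) = ys t) :
    ∀ (πR : Strat V) (init : V × V),
      (⨅ t : ℕ, freeProb1 G (piCSharp G σ) πR init t) = 0 :=
  piCSharp_captures_almost_surely_general G σ hσ T hT
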